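/- Let 𝐁 be an additive track category, 𝐛 a full track subcategory with 𝐚 = 𝐛_≃, satisfying either (a) 𝐁 is 𝕃-additive and 𝐚 is closed under 𝕃, or (b) 𝐁 is ℝ-additive and ℝ preserves 𝐚-exactness and 𝐚 is closed under ℝ. Let (X_•,d,δ) be a 𝐛-exact 𝐛-resolution of an object X and Y any object. For a cocycle class [c] ∈ Ext^n_𝐚(X,Y) (represented by c : X_n → Y with [c][d_n] = 0) and a chosen track γ : 0 ⇒ cd_n, the cohomology class of Γ_{c,γ} = cδ_n □ γd_{n+1} in H^{n+2}(Aut(0_{X_•,Y})) ≅ Ext^{n+2}_𝐚(X,Y)^1 does not depend on the choice of the representative c, of the track γ, or of the 𝐛-resolution of X, and the assignment [c] ↦ [Γ_{c,γ}] defines a group homomorphism d_(2)^{n,m} : Ext^n_𝐚(X,Y)^m → Ext^{n+2}_𝐚(X,Y)^{m+1} (the secondary differential). -/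

import Mathlib

/-!
Track categories.  A track category is a category enriched in groupoids, i.e. a strict
2-category (`Bicategory` + `Bicategory.Strict`) all of whose 2-cells ("tracks") are
invertible.  Invertibility of all 2-cells is imposed by the hypothesis `hinv` below.
A strict zero object is an object whose hom-groupoids from and to any object are
trivial (exactly one map, exactly one track).
-/

open CategoryTheory CategoryTheory.Bicategory

universe w v u

/-- A strict zero object `∗` in a (strict) track category: for every `X` the
hom-groupoids `⟦X,∗⟧` and `⟦∗,X⟧` have exactly one object and one morphism. -/
class StrictZero (B : Type u) [Bicategory.{w, v} B] where
  zobj : B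
  uniqueTo : ∀ X : B, Unique (X ⟶ zobj)
  uniqueFrom : ∀ X : B, Unique (zobj ⟶ X)
  uniqueTrackTo : ∀ (X : B) (f g : X ⟶ zobj), Unique (f ⟶ g)
  uniqueTrackFrom : ∀ (X : B) (f g : zobj ⟶ X), Unique (f ⟶ g)

section

variable {B : Type u} [Bicategory.{w, v} B] [Bicategory.Strict B] [StrictZero B]

/-- The zero map `0_{X,Y} : X → ∗ → Y`. -/
def zmap (X Y : B) : X ⟶ Y :=
  (StrictZero.uniqueTo X).default ≫ (StrictZero.uniqueFrom Y).default

lemma zmap_comp (X : B) {Y Z : B} (f : Y ⟶ Z) : zmap X Y ≫ f = zmap X Z := by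
  unfold zmap
  rw [Bicategory.Strict.assoc]
  congr 1
  haveI := StrictZero.uniqueFrom (B := B) Z
  exact Subsingleton.elim _ _

lemma comp_zmap {X Y : B} (f : X ⟶ Y) (Z : B) : f ≫ zmap Y Z = zmap X Z := by
  unfold zmap
  rw [← Bicategory.Strict.assoc]
  congr 1
  haveI := StrictZero.uniqueTo (B := B) X
  exact Subsingleton.elim _ _

end

/-- A secondary chain complex `(A, d, δ)` in a track category `B`: objects `A_n`, maps
`d_n : A_{n+1} ⟶ A_n` and tracks `δ_n : d_n d_{n+1} ⇒ 0` such that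
`d_{n-1} δ_n = δ_{n-1} d_{n+1}` (as tracks `d_{n-1} d_n d_{n+1} ⇒ 0`). -/
structure SecChainComplex (B : Type u) [Bicategory.{w, v} B] [Bicategory.Strict B]
    [StrictZero B] where
  X : ℤ → B
  d : ∀ n : ℤ, X (n + 1) ⟶ X n
  δ : ∀ n : ℤ, (d (n + 1) ≫ d n) ⟶ zmap (X (n + 1 + 1)) (X n)
  compat : ∀ n : ℤ,
    (δ (n + 1) ▷ d n) ≫ eqToHom (zmap_comp (X (n + 1 + 1 + 1)) (d n)) =
      eqToHom (Bicategory.Strict.assoc (d (n + 1 + 1)) (d (n + 1)) (d n)) ≫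
        (d (n + 1 + 1) ◁ δ n) ≫ eqToHom (comp_zmap (d (n + 1 + 1)) (X n))

namespace SecChainComplex

variable {B : Type u} [Bicategory.{w, v} B] [Bicategory.Strict B] [StrictZero B]

/-- A `𝐛`-cycle of degree `n+2` in a secondary chain complex: a map `c : T ⟶ A_{n+2}`
together with a track `γ : d_{n+1} c ⇒ 0` such that `d_n γ = δ_n c`. -/
def IsSecCycle (A : SecChainComplex B) {T : B} (n : ℤ) (c : T ⟶ A.X (n + 1 + 1))
    (γ : c ≫ A.d (n + 1) ⟶ zmap T (A.X (n + 1))) : Prop :=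
  (γ ▷ A.d n) ≫ eqToHom (zmap_comp T (A.d n)) =
    eqToHom (Bicategory.Strict.assoc c (A.d (n + 1)) (A.d n)) ≫
      (c ◁ A.δ n) ≫ eqToHom (comp_zmap c (A.X n))

/-- A `𝐛`-cycle `(c,γ)` is a `𝐛`-boundary if there are `a : T ⟶ A_{n+3}` and a track
`α : c ⇒ d_{n+2} a` with `γ = δ_{n+1} a □ d_{n+1} α`. -/
def IsSecBoundary (A : SecChainComplex B) {T : B} (n : ℤ) (c : T ⟶ A.X (n + 1 + 1))
    (γ : c ≫ A.d (n + 1) ⟶ zmap T (A.X (n + 1))) : Prop :=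
  ∃ (a : T ⟶ A.X (n + 1 + 1 + 1)) (α : c ⟶ a ≫ A.d (n + 1 + 1)),
    γ = (α ▷ A.d (n + 1)) ≫
        eqToHom (Bicategory.Strict.assoc a (A.d (n + 1 + 1)) (A.d (n + 1))) ≫
        (a ◁ A.δ (n + 1)) ≫ eqToHom (comp_zmap a (A.X (n + 1)))

/-- `𝐛`-exactness of a secondary chain complex, `𝐛` being the full track subcategory
on the objects satisfying `Pb`: every `𝐛`-cycle is a `𝐛`-boundary. -/
def IsSecExact (A : SecChainComplex B) (Pb : B → Prop) : Prop :=
  ∀ (n : ℤ) (T : B), Pb T → ∀ (c : T ⟶ A.X (n + 1 + 1))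
    (γ : c ≫ A.d (n + 1) ⟶ zmap T (A.X (n + 1))),
    A.IsSecCycle n c γ → A.IsSecBoundary n c γ

/-- A `B₀`-augmented secondary chain complex: `X_{-1} = B₀`, `X_{-n} = ∗` and
`δ_{-n}` the identity track for `n > 1`. -/
structure IsAugmented (A : SecChainComplex B) (B₀ : B) : Prop where
  eq_neg_one : A.X (-1) = B₀
  eq_zero_of_lt : ∀ n : ℤ, n < -1 → A.X n = StrictZero.zobj (B := B)
  δ_eqToHom : ∀ n : ℤ, n < -1 →
    ∀ h : A.d (n + 1) ≫ A.d n = zmap (A.X (n + 1 + 1)) (A.X n), A.δ n = eqToHom h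

/-- A `𝐛`-resolution of `B₀`: a `𝐛`-exact `B₀`-augmented secondary chain complex with
all terms in nonnegative degrees in `𝐛`. -/
structure IsSecResolution (A : SecChainComplex B) (Pb : B → Prop) (B₀ : B) : Prop where
  augmented : A.IsAugmented B₀
  exact : A.IsSecExact Pb
  mem : ∀ n : ℤ, 0 ≤ n → Pb (A.X n)

end SecChainComplex

/-- A `ℤ`-indexed chain complex in an additive category `C`. -/
structure ChainComplexZ (C : Type*) [Category C] [Preadditive C] where
  X : ℤ → C
  d : ∀ n : ℤ, X (n + 1) ⟶ X n
  dd : ∀ n : ℤ, d (n + 1) ≫ d n = 0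

namespace ChainComplexZ

variable {C : Type*} [Category C] [Preadditive C]

/-- The chain complex of abelian groups `Hom(T, A_•)` is exact (acyclic). -/
def HomExact (A : ChainComplexZ C) (T : C) : Prop :=
  ∀ (n : ℤ) (a : T ⟶ A.X (n + 1)), a ≫ A.d n = 0 →
    ∃ b : T ⟶ A.X (n + 1 + 1), b ≫ A.d (n + 1) = a

/-- `𝐚`-exactness of a chain complex, where `𝐚` is the full subcategory on the
objects satisfying `P`. -/
def aExact (A : ChainComplexZ C) (P : C → Prop) : Prop :=
  ∀ T : C, P T → A.HomExact T

end ChainComplexZ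

/-! ### The homotopy category of a track category, and additive track categories -/

section HomotopyCategory

variable (B : Type u) [Bicategory.{w, v} B] [Bicategory.Strict B]

/-- The underlying (1-)category of a strict track category. -/
instance (priority := 100) trackUnderlyingCategory : Category.{v} B :=
  { (inferInstance : CategoryStruct.{v} B) with
    id_comp := fun f => Bicategory.Strict.id_comp f
    comp_id := fun f => Bicategory.Strict.comp_id f
    assoc := fun f g h => Bicategory.Strict.assoc f g h }

/-- Two maps are homotopic if there is a track between them. -/
def homotopyRel : HomRel B := fun {X Y} (f g : X ⟶ Y) => Nonempty ((f : X ⟶ Y) ⟶ g)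

/-- The homotopy category `𝐀 = 𝐁_≃` of the track category `𝐁`, obtained by
identifying homotopic maps. -/
abbrev HoCat := CategoryTheory.Quotient (homotopyRel B)

variable {B}

/-- An object of `𝐁`, seen in the homotopy category. -/
def hQ (X : B) : HoCat B := (CategoryTheory.Quotient.functor (homotopyRel B)).obj X

/-- The homotopy class of a map. -/
def hQm {X Y : B} (f : X ⟶ Y) : hQ X ⟶ hQ Y :=
  (CategoryTheory.Quotient.functor (homotopyRel B)).map f

end HomotopyCategory

section Image

variable {B : Type u} [Bicategory.{w, v} B] [Bicategory.Strict B] [StrictZero B]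
  [Preadditive (HoCat B)]

/-- The image `(A, [d])` in the homotopy category of a secondary chain complex
`(A, d, δ)`.  (The hypothesis `hzero` states that the homotopy class of the zero map
`0_{X,Y}` is the zero element of the abelian hom-group of the additive homotopy
category.) -/
def SecChainComplex.hoComplex (S : SecChainComplex B)
    (hzero : ∀ X Y : B, hQm (zmap X Y) = (0 : hQ X ⟶ hQ Y)) :
    ChainComplexZ (HoCat B) where
  X n := hQ (S.X n)
  d n := hQm (S.d n)
  dd n := by
    have h1 : hQm (S.d (n + 1)) ≫ hQm (S.d n) = hQm (S.d (n + 1) ≫ S.d n) :=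
      ((CategoryTheory.Quotient.functor (homotopyRel B)).map_comp _ _).symm
    have h2 : hQm (S.d (n + 1) ≫ S.d n) = hQm (zmap (S.X (n + 1 + 1)) (S.X n)) :=
      CategoryTheory.Quotient.sound _ ⟨S.δ n⟩
    rw [h1, h2, hzero]

end Image

section Linear

variable (B : Type u) [Bicategory.{w, v} B] [Bicategory.Strict B] [StrictZero B]
  [Preadditive (HoCat B)]

/-- An `𝕃`-additive track category: an additive endofunctor `𝕃` of the additive
homotopy category `𝐀`, left-representing the bifunctor `D`, i.e. together with a
system of isomorphisms `σ_f : D(X,Y) = Hom_𝐀(𝕃X, Y) ≅ Aut(f)` as in the definition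
of a linear track extension. -/
structure LAdditiveStr where
  L : HoCat B ⥤ HoCat B
  Ladd : L.Additive
  σ : ∀ {X Y : B} (f : X ⟶ Y), (L.obj (hQ X) ⟶ hQ Y) ≃ (f ⟶ f)
  σ_add : ∀ {X Y : B} (f : X ⟶ Y) (a b : L.obj (hQ X) ⟶ hQ Y),
    σ f (a + b) = σ f a ≫ σ f b
  σ_post : ∀ {X Y Z : B} (f : X ⟶ Y) (g : Y ⟶ Z) (a : L.obj (hQ X) ⟶ hQ Y),
    σ (f ≫ g) (a ≫ hQm g) = σ f a ▷ g
  σ_pre : ∀ {X Y Z : B} (f : X ⟶ Y) (g : Y ⟶ Z) (b : L.obj (hQ Y) ⟶ hQ Z),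
    σ (f ≫ g) (L.map (hQm f) ≫ b) = f ◁ σ g b
  σ_natural : ∀ {X Y : B} {f f' : X ⟶ Y} (η : f ⟶ f') (a : L.obj (hQ X) ⟶ hQ Y),
    σ f a ≫ η = η ≫ σ f' a

/-- An `ℝ`-additive track category: an additive endofunctor `ℝ` of the additive
homotopy category `𝐀` right-representing the bifunctor `D`, with isomorphisms
`σ_f : D(X,Y) = Hom_𝐀(X, ℝY) ≅ Aut(f)`. -/
structure RAdditiveStr where
  R : HoCat B ⥤ HoCat B
  Radd : R.Additive
  Rzero : ∀ {X Y : HoCat B}, R.map (0 : X ⟶ Y) = 0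
  σ : ∀ {X Y : B} (f : X ⟶ Y), (hQ X ⟶ R.obj (hQ Y)) ≃ (f ⟶ f)
  σ_add : ∀ {X Y : B} (f : X ⟶ Y) (a b : hQ X ⟶ R.obj (hQ Y)),
    σ f (a + b) = σ f a ≫ σ f b
  σ_post : ∀ {X Y Z : B} (f : X ⟶ Y) (g : Y ⟶ Z) (a : hQ X ⟶ R.obj (hQ Y)),
    σ (f ≫ g) (a ≫ R.map (hQm g)) = σ f a ▷ g
  σ_pre : ∀ {X Y Z : B} (f : X ⟶ Y) (g : Y ⟶ Z) (b : hQ Y ⟶ R.obj (hQ Z)),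
    σ (f ≫ g) (hQm f ≫ b) = f ◁ σ g b
  σ_natural : ∀ {X Y : B} {f f' : X ⟶ Y} (η : f ⟶ f') (a : hQ X ⟶ R.obj (hQ Y)),
    σ f a ≫ η = η ≫ σ f' a

end Linear

/-- Mapping a `ℤ`-indexed chain complex through a zero-preserving functor. -/
def ChainComplexZ.mapComplex {C : Type*} [Category C] [Preadditive C]
    {D : Type*} [Category D] [Preadditive D] (A : ChainComplexZ C) (F : C ⥤ D)
    (hF : ∀ {X Y : C}, F.map (0 : X ⟶ Y) = 0) : ChainComplexZ D where
  X n := F.obj (A.X n)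
  d n := F.map (A.d n)
  dd n := by rw [← F.map_comp, A.dd n, hF]

section Gamma

variable {B : Type u} [Bicategory.{w, v} B] [Bicategory.Strict B] [StrictZero B]

/-- The track `Γ_{c,γ} = cδ □ γd₁ ∈ Aut(0_{A₂,Y})` associated to maps
`d₁ : A₂ ⟶ A₁`, `d₀ : A₁ ⟶ A₀`, a track `δ : d₀d₁ ⇒ 0`, a map `c : A₀ ⟶ Y` and a
track `γ : 0 ⇒ c d₀`. -/
def GammaGen {A₂ A₁ A₀ Y : B} (d₁ : A₂ ⟶ A₁) (d₀ : A₁ ⟶ A₀)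
    (δ : (d₁ ≫ d₀) ⟶ zmap A₂ A₀) (c : A₀ ⟶ Y) (γ : zmap A₁ Y ⟶ d₀ ≫ c) :
    zmap A₂ Y ⟶ zmap A₂ Y :=
  eqToHom (comp_zmap d₁ Y).symm ≫ (d₁ ◁ γ) ≫
    eqToHom (Bicategory.Strict.assoc d₁ d₀ c).symm ≫ (δ ▷ c) ≫
    eqToHom (zmap_comp A₂ c)

/-- `Γ_{c,γ}` for a cocycle `c : X_n ⟶ Y` on a secondary chain complex and a track
`γ : 0 ⇒ c d_n`. -/
def SecChainComplex.Gamma (S : SecChainComplex B) {Y : B} (n : ℤ)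
    (c : S.X n ⟶ Y) (γ : zmap (S.X (n + 1)) Y ⟶ S.d n ≫ c) :
    zmap (S.X (n + 1 + 1)) Y ⟶ zmap (S.X (n + 1 + 1)) Y :=
  GammaGen (S.d (n + 1)) (S.d n) (S.δ n) c γ

end Gamma

section SecMap

variable {B : Type u} [Bicategory.{w, v} B] [Bicategory.Strict B] [StrictZero B]

/-- A secondary chain map `(f,φ) : (A,d,δ) → (A',d',δ')`: maps `f_n : A_n ⟶ A'_n` and
tracks `φ_n : f_n d_n ⇒ d'_n f_{n+1}` such that
`δ'_{n-1} f_{n+1} □ d'_{n-1} φ_n □ φ_{n-1} d_n = f_{n-1} δ_{n-1}` for all `n`. -/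
def IsSecChainMap (A A' : SecChainComplex B) (f : ∀ n : ℤ, A.X n ⟶ A'.X n)
    (φ : ∀ n : ℤ, (A.d n ≫ f n) ⟶ (f (n + 1) ≫ A'.d n)) : Prop :=
  ∀ n : ℤ,
    eqToHom (Bicategory.Strict.assoc (A.d (n + 1)) (A.d n) (f n)) ≫
        (A.d (n + 1) ◁ φ n) ≫
        eqToHom (Bicategory.Strict.assoc (A.d (n + 1)) (f (n + 1)) (A'.d n)).symm ≫
        (φ (n + 1) ▷ A'.d n) ≫
        eqToHom (Bicategory.Strict.assoc (f (n + 1 + 1)) (A'.d (n + 1)) (A'.d n)) ≫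
        (f (n + 1 + 1) ◁ A'.δ n) ≫
        eqToHom (comp_zmap (f (n + 1 + 1)) (A'.X n)) =
      (A.δ n ▷ f n) ≫ eqToHom (zmap_comp (A.X (n + 1 + 1)) (f n))

end SecMap

section GammaCob

variable {B : Type u} [Bicategory.{w, v} B] [Bicategory.Strict B] [StrictZero B]

/-- The coboundary `Λ d_k` in the cochain complex `Aut(0_{X_•,Y})` of an element
`Λ ∈ Aut(0_{X_k,Y})`. -/
def GammaCob (S : SecChainComplex B) (Y : B) (k : ℤ)
    (Λ : zmap (S.X k) Y ⟶ zmap (S.X k) Y) :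
    zmap (S.X (k + 1)) Y ⟶ zmap (S.X (k + 1)) Y :=
  eqToHom (comp_zmap (S.d k) Y).symm ≫ (S.d k ◁ Λ) ≫ eqToHom (comp_zmap (S.d k) Y)

/-- Two elements of `Aut(0_{X_{k+1},Y})` are cohomologous in the cochain complex
`Aut(0_{X_•,Y})`, i.e. differ by a coboundary. -/
def GammaCohomologous (S : SecChainComplex B) (Y : B) (k : ℤ)
    (Γ Γ' : zmap (S.X (k + 1)) Y ⟶ zmap (S.X (k + 1)) Y) : Prop :=
  ∃ Λ : zmap (S.X k) Y ⟶ zmap (S.X k) Y, Γ' = Γ ≫ GammaCob S Y k Λ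

end GammaCob

/-!
Under `σ`, the track `Γ_{c,γ} ∈ Aut(0_{X_{n+2},Y})` becomes an element of `D(X_{n+2},Y)`, and all
comparisons are made in these coordinates, where a coboundary is an element of the form `b d_{n+1}`.
Replacing `γ` by `γ □ σ(b)` multiplies `Γ` by `σ(b d_{n+1})`. If `c` is homotopic to a composite
`v u`, the coordinate of `Γ_{c,γ}` is `v_*` of that of `Γ_{u,γ_u}` up to coboundaries, and `v_*` is
additive in the homotopy class of `v`; factoring `c₁`, `c₂` and `c₁ + c₂` through `Y ⊕ Y` as
`pr₁ u`, `pr₂ u` and `(pr₁ + pr₂) u` gives additivity. A coboundary `h d_{n-1}` has trivial `Γ` for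
the track induced by `δ_{n-1}`, so additivity also gives independence of the representative.
Naturality along a secondary chain map `(f, φ)` is a direct computation from its defining identity.
-/

section ZeroMap

variable {B : Type u} [Bicategory.{w, v} B] [Bicategory.Strict B] [StrictZero B]

lemma whiskerRight_zmap {X X' : B} {f g : X ⟶ X'} (η : f ⟶ g) (Y : B) :
    η ▷ zmap X' Y = eqToHom (by rw [comp_zmap f Y, comp_zmap g Y]) := by
  unfold zmap
  have := StrictZero.uniqueTo (B := B) X
  have := StrictZero.uniqueTrackTo (B := B) X
  have h : η ▷ (StrictZero.uniqueTo X').default =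
      eqToHom (Subsingleton.elim (f ≫ (StrictZero.uniqueTo X').default) _) :=
    Subsingleton.elim _ _
  simp [Bicategory.whiskerRight_comp, h, Bicategory.Strict.associator_eqToIso,
    Bicategory.eqToHom_whiskerRight]

lemma zmap_whiskerLeft {Y Z : B} (X : B) {f g : Y ⟶ Z} (η : f ⟶ g) :
    zmap X Y ◁ η = eqToHom (by rw [zmap_comp X f, zmap_comp X g]) := by
  unfold zmap
  have := StrictZero.uniqueFrom (B := B) Z
  have := StrictZero.uniqueTrackFrom (B := B) Z
  have h : (StrictZero.uniqueFrom Y).default ◁ η =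
      eqToHom (Subsingleton.elim ((StrictZero.uniqueFrom Y).default ≫ f) _) :=
    Subsingleton.elim _ _
  simp [Bicategory.comp_whiskerLeft, h, Bicategory.Strict.associator_eqToIso,
    Bicategory.whiskerLeft_eqToHom]

end ZeroMap

section HomotopyClass

variable {B : Type u} [Bicategory.{w, v} B] [Bicategory.Strict B]

lemma hQm_comp {X Y Z : B} (f : X ⟶ Y) (g : Y ⟶ Z) : hQm (f ≫ g) = hQm f ≫ hQm g :=
  (Quotient.functor (homotopyRel B)).map_comp f g

lemma hQm_eq_of_track {X Y : B} {f g : X ⟶ Y} (η : f ⟶ g) : hQm f = hQm g :=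
  CategoryTheory.Quotient.sound _ ⟨η⟩

lemma hQm_surjective {X Y : B} (e : hQ X ⟶ hQ Y) : ∃ f : X ⟶ Y, hQm f = e :=
  (Quotient.functor (homotopyRel B)).map_surjective e

variable (hinv : ∀ {X' Y' : B} {f g : X' ⟶ Y'} (η : f ⟶ g), IsIso η)
include hinv

lemma homotopyRel_congruence : Congruence (homotopyRel B) where
  equivalence :=
    { refl := fun f => ⟨𝟙 f⟩
      symm := fun ⟨η⟩ => ⟨letI := hinv η; inv η⟩
      trans := fun ⟨η⟩ ⟨θ⟩ => ⟨η ≫ θ⟩ }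
  comp_left := fun f _ _ ⟨η⟩ => ⟨f ◁ η⟩
  comp_right := fun g ⟨η⟩ => ⟨η ▷ g⟩

lemma nonempty_track_of_hQm_eq {X Y : B} {f g : X ⟶ Y} (h : hQm f = hQm g) :
    Nonempty (f ⟶ g) :=
  have := homotopyRel_congruence hinv
  (Quotient.functor_map_eq_iff (homotopyRel B) f g).mp h

end HomotopyClass

section Biproduct

variable {B : Type u} [Bicategory.{w, v} B] [Bicategory.Strict B] [Preadditive (HoCat B)]
  [Limits.HasBinaryBiproducts (HoCat B)]

lemma exists_hQm_comp_eq_biprod {X Y : B} (a b : X ⟶ Y) :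
    ∃ (W : B) (u : X ⟶ W) (v₁ v₂ : W ⟶ Y), hQm (u ≫ v₁) = hQm a ∧ hQm (u ≫ v₂) = hQm b ∧
      ∀ {T : B} (d : T ⟶ X), hQm (d ≫ a) = 0 → hQm (d ≫ b) = 0 → hQm (d ≫ u) = 0 := by
  obtain ⟨u, hu⟩ := hQm_surjective (Limits.biprod.lift (hQm a) (hQm b))
  obtain ⟨v₁, hv₁⟩ := hQm_surjective (Limits.biprod.fst : hQ Y ⊞ hQ Y ⟶ hQ Y)
  obtain ⟨v₂, hv₂⟩ := hQm_surjective (Limits.biprod.snd : hQ Y ⊞ hQ Y ⟶ hQ Y)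
  -- `hQ (hQ Y ⊞ hQ Y).as` is `hQ Y ⊞ hQ Y` only up to unfolding, hence `exact` and `erw` below.
  refine ⟨(hQ Y ⊞ hQ Y).as, u, v₁, v₂, ?_, ?_, fun d ha hb => ?_⟩
  · rw [hQm_comp, hu, hv₁]
    exact Limits.biprod.lift_fst _ _
  · rw [hQm_comp, hu, hv₂]
    exact Limits.biprod.lift_snd _ _
  · rw [hQm_comp, hu]
    apply Limits.biprod.hom_ext
    · erw [Category.assoc, Limits.biprod.lift_fst, ← hQm_comp, ha, Limits.zero_comp]
    · erw [Category.assoc, Limits.biprod.lift_snd, ← hQm_comp, hb, Limits.zero_comp]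

end Biproduct

namespace SecChainComplex

variable {B : Type u} [Bicategory.{w, v} B] [Bicategory.Strict B] [StrictZero B]
  (S : SecChainComplex B) {Y : B} (n : ℤ)

lemma Gamma_comp_whiskerLeft {c c' : S.X n ⟶ Y} (τ : c ⟶ c')
    (γ : zmap (S.X (n + 1)) Y ⟶ S.d n ≫ c) :
    S.Gamma n c' (γ ≫ S.d n ◁ τ) = S.Gamma n c γ := by
  have hτ : S.d (n + 1) ◁ S.d n ◁ τ =
      eqToHom (Bicategory.Strict.assoc (S.d (n + 1)) (S.d n) c).symm ≫
        (S.d (n + 1) ≫ S.d n) ◁ τ ≫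
        eqToHom (Bicategory.Strict.assoc (S.d (n + 1)) (S.d n) c') := by
    simp [Bicategory.comp_whiskerLeft, Bicategory.Strict.associator_eqToIso]
  unfold Gamma GammaGen
  simp only [Bicategory.whiskerLeft_comp, hτ, Category.assoc, eqToHom_trans_assoc,
    eqToHom_refl, Category.id_comp]
  rw [Bicategory.whisker_exchange_assoc]
  simp [zmap_whiskerLeft]

lemma Gamma_comp {W : B} (u : S.X n ⟶ W) (γ : zmap (S.X (n + 1)) W ⟶ S.d n ≫ u)
    (v : W ⟶ Y) :
    S.Gamma n (u ≫ v)
        (eqToHom (zmap_comp (S.X (n + 1)) v).symm ≫ γ ▷ v ≫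
          eqToHom (Bicategory.Strict.assoc (S.d n) u v)) =
      eqToHom (zmap_comp (S.X (n + 1 + 1)) v).symm ≫ S.Gamma n u γ ▷ v ≫
        eqToHom (zmap_comp (S.X (n + 1 + 1)) v) := by
  unfold Gamma GammaGen
  simp [Bicategory.whiskerRight_comp, Bicategory.whisker_assoc,
    Bicategory.Strict.associator_eqToIso, Bicategory.eqToHom_whiskerRight,
    Bicategory.whiskerLeft_eqToHom]

lemma Gamma_d_comp_eq_id (k : ℤ) (h : S.X k ⟶ Y) [IsIso (S.δ k)] :
    S.Gamma (k + 1) (S.d k ≫ h)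
        (eqToHom (zmap_comp (S.X (k + 1 + 1)) h).symm ≫ inv (S.δ k) ▷ h ≫
          eqToHom (Bicategory.Strict.assoc (S.d (k + 1)) (S.d k) h)) =
      𝟙 (zmap (S.X (k + 1 + 1 + 1)) Y) := by
  have hcompat : S.δ (k + 1) ▷ S.d k =
      eqToHom (Bicategory.Strict.assoc (S.d (k + 1 + 1)) (S.d (k + 1)) (S.d k)) ≫
        S.d (k + 1 + 1) ◁ S.δ k ≫
        eqToHom (comp_zmap (S.d (k + 1 + 1)) (S.X k)) ≫
        eqToHom (zmap_comp (S.X (k + 1 + 1 + 1)) (S.d k)).symm := by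
    rw [← cancel_mono (eqToHom (zmap_comp (S.X (k + 1 + 1 + 1)) (S.d k)))]
    simpa using S.compat k
  unfold Gamma GammaGen
  rw [Bicategory.whiskerRight_comp, hcompat]
  simp only [Bicategory.whiskerLeft_comp, Bicategory.comp_whiskerRight,
    Bicategory.whisker_assoc, Bicategory.Strict.associator_eqToIso, eqToIso.hom,
    eqToIso.inv, Bicategory.eqToHom_whiskerRight, Bicategory.whiskerLeft_eqToHom,
    Category.assoc, eqToHom_trans_assoc, eqToHom_refl, Category.id_comp]
  rw [← Bicategory.whiskerLeft_comp_assoc, ← Bicategory.comp_whiskerRight, IsIso.inv_hom_id]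
  simp

end SecChainComplex

namespace IsSecChainMap

variable {B : Type u} [Bicategory.{w, v} B] [Bicategory.Strict B] [StrictZero B]
  {S S' : SecChainComplex B} {f : ∀ k : ℤ, S.X k ⟶ S'.X k}
  {φ : ∀ k : ℤ, (S.d k ≫ f k) ⟶ (f (k + 1) ≫ S'.d k)}

lemma δ_whiskerRight (hfφ : IsSecChainMap S S' f φ) (n : ℤ) :
    S.δ n ▷ f n =
      eqToHom (Bicategory.Strict.assoc (S.d (n + 1)) (S.d n) (f n)) ≫
        S.d (n + 1) ◁ φ n ≫
        eqToHom (Bicategory.Strict.assoc (S.d (n + 1)) (f (n + 1)) (S'.d n)).symm ≫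
        φ (n + 1) ▷ S'.d n ≫
        eqToHom (Bicategory.Strict.assoc (f (n + 1 + 1)) (S'.d (n + 1)) (S'.d n)) ≫
        f (n + 1 + 1) ◁ S'.δ n ≫
        eqToHom (comp_zmap (f (n + 1 + 1)) (S'.X n)) ≫
        eqToHom (zmap_comp (S.X (n + 1 + 1)) (f n)).symm := by
  rw [← cancel_mono (eqToHom (zmap_comp (S.X (n + 1 + 1)) (f n)))]
  simpa using (hfφ n).symm

lemma whiskerLeft_Gamma (hfφ : IsSecChainMap S S' f φ) {Y : B} (n : ℤ) [IsIso (φ n)]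
    (c' : S'.X n ⟶ Y) (γ' : zmap (S'.X (n + 1)) Y ⟶ S'.d n ≫ c') :
    eqToHom (comp_zmap (f (n + 1 + 1)) Y).symm ≫ f (n + 1 + 1) ◁ S'.Gamma n c' γ' ≫
        eqToHom (comp_zmap (f (n + 1 + 1)) Y) =
      S.Gamma n (f n ≫ c')
        (eqToHom (comp_zmap (f (n + 1)) Y).symm ≫ f (n + 1) ◁ γ' ≫
          eqToHom (Bicategory.Strict.assoc (f (n + 1)) (S'.d n) c').symm ≫
          inv (φ n) ▷ c' ≫ eqToHom (Bicategory.Strict.assoc (S.d n) (f n) c')) := by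
  -- Expand `δ_n f_n` by the chain map identity: `φ_n` cancels against `φ_n⁻¹`, and `φ_{n+1}`
  -- is moved past `γ'` by the interchange law.
  unfold SecChainComplex.Gamma GammaGen
  rw [Bicategory.whiskerRight_comp, hfφ.δ_whiskerRight]
  simp only [Bicategory.whiskerLeft_comp, Bicategory.comp_whiskerRight,
    Bicategory.whisker_assoc, Bicategory.Strict.associator_eqToIso, eqToIso.hom,
    eqToIso.inv, Bicategory.eqToHom_whiskerRight, Bicategory.whiskerLeft_eqToHom,
    Category.assoc, eqToHom_trans_assoc, eqToHom_refl, Category.id_comp]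
  rw [← Bicategory.whiskerLeft_comp_assoc, ← Bicategory.comp_whiskerRight,
    IsIso.inv_hom_id]
  simp only [Bicategory.id_whiskerRight, Bicategory.whiskerLeft_id,
    Category.id_comp, eqToHom_trans_assoc]
  have h0 := Bicategory.whisker_exchange (φ (n + 1)) γ'
  simp only [Bicategory.comp_whiskerLeft, Bicategory.whiskerRight_comp,
    whiskerRight_zmap, Bicategory.Strict.associator_eqToIso, eqToIso.hom,
    eqToIso.inv, Category.assoc, eqToHom_trans_assoc] at h0
  have h1 : S.d (n + 1) ◁ f (n + 1) ◁ γ' ≫ eqToHom (by simp only [Bicategory.Strict.assoc]) ≫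
        φ (n + 1) ▷ S'.d n ▷ c' =
      eqToHom (by simp only [comp_zmap]) ≫ f (n + 1 + 1) ◁ S'.d (n + 1) ◁ γ' ≫
        eqToHom (by simp only [Bicategory.Strict.assoc]) := by
    rw [← cancel_epi (eqToHom (Bicategory.Strict.assoc _ _ _)), ← cancel_mono
      (eqToHom (Bicategory.Strict.assoc (f (n + 1 + 1) ≫ S'.d (n + 1)) (S'.d n) c'))]
    simpa using h0
  rw [reassoc_of% h1]
  simp

end IsSecChainMap

/-- The common content of `LAdditiveStr` and `RAdditiveStr`: the bifunctor `D` with the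
isomorphisms `σ_f : D(X,Y) ≅ Aut(f)`, where `pre f` and `post g` are the actions of `D` on maps. -/
structure AdditiveTrackStr (B : Type u) [Bicategory.{w, v} B] [Bicategory.Strict B]
    [Preadditive (HoCat B)] where
  D : B → B → Type v
  addCommGroup : ∀ X Y : B, AddCommGroup (D X Y)
  σ : ∀ {X Y : B} (f : X ⟶ Y), D X Y ≃ (f ⟶ f)
  σ_add : ∀ {X Y : B} (f : X ⟶ Y) (a b : D X Y), σ f (a + b) = σ f a ≫ σ f b
  σ_natural : ∀ {X Y : B} {f f' : X ⟶ Y} (η : f ⟶ f') (a : D X Y),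
    σ f a ≫ η = η ≫ σ f' a
  pre : ∀ {X Y Z : B}, (X ⟶ Y) → D Y Z →+ D X Z
  post : ∀ {X Y Z : B}, (Y ⟶ Z) → D X Y → D X Z
  σ_pre : ∀ {X Y Z : B} (f : X ⟶ Y) (g : Y ⟶ Z) (b : D Y Z),
    σ (f ≫ g) (pre f b) = f ◁ σ g b
  σ_post : ∀ {X Y Z : B} (f : X ⟶ Y) (g : Y ⟶ Z) (a : D X Y),
    σ (f ≫ g) (post g a) = σ f a ▷ g
  post_add : ∀ {X Y Z : B} {g g₁ g₂ : Y ⟶ Z}, hQm g = hQm g₁ + hQm g₂ →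
    ∀ a : D X Y, post g a = post g₁ a + post g₂ a

attribute [instance] AdditiveTrackStr.addCommGroup

section

variable {B : Type u} [Bicategory.{w, v} B] [Bicategory.Strict B] [StrictZero B]
  [Preadditive (HoCat B)]

def LAdditiveStr.toAdditiveTrackStr (l : LAdditiveStr B) : AdditiveTrackStr B where
  D X Y := l.L.obj (hQ X) ⟶ hQ Y
  addCommGroup _ _ := inferInstance
  σ := l.σ
  σ_add := l.σ_add
  σ_natural := l.σ_natural
  pre f := Preadditive.leftComp _ (l.L.map (hQm f))
  post g a := a ≫ hQm g
  σ_pre := l.σ_pre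
  σ_post := l.σ_post
  post_add h a := by rw [h, Preadditive.comp_add]

def RAdditiveStr.toAdditiveTrackStr (r : RAdditiveStr B) : AdditiveTrackStr B where
  D X Y := hQ X ⟶ r.R.obj (hQ Y)
  addCommGroup _ _ := inferInstance
  σ := r.σ
  σ_add := r.σ_add
  σ_natural := r.σ_natural
  pre f := Preadditive.leftComp _ (hQm f)
  post g a := a ≫ r.R.map (hQm g)
  σ_pre := r.σ_pre
  σ_post := r.σ_post
  post_add h a := by
    have := r.Radd
    rw [h, Functor.map_add, Preadditive.comp_add]

end

namespace AdditiveTrackStr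

variable {B : Type u} [Bicategory.{w, v} B] [Bicategory.Strict B] [Preadditive (HoCat B)]
  (A : AdditiveTrackStr B) (hinv : ∀ {X' Y' : B} {f g : X' ⟶ Y'} (η : f ⟶ g), IsIso η)

lemma σ_symm_id {X Y : B} (f : X ⟶ Y) : (A.σ f).symm (𝟙 f) = 0 := by
  have h : (A.σ f).symm (𝟙 f) + (A.σ f).symm (𝟙 f) = (A.σ f).symm (𝟙 f) :=
    (A.σ f).injective (by simp [A.σ_add])
  simpa using h

lemma σ_symm_comp {X Y : B} {f : X ⟶ Y} (η θ : f ⟶ f) :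
    (A.σ f).symm (η ≫ θ) = (A.σ f).symm η + (A.σ f).symm θ :=
  (A.σ f).injective (by simp [A.σ_add])

variable [StrictZero B] (S : SecChainComplex B) {Y : B}

lemma GammaCob_σ (k : ℤ) (t : A.D (S.X k) Y) :
    GammaCob S Y k (A.σ _ t) = A.σ _ (A.pre (S.d k) t) := by
  unfold GammaCob
  rw [← A.σ_pre, A.σ_natural, ← Category.assoc, eqToHom_trans, eqToHom_refl, Category.id_comp]

lemma gammaCohomologous_of_σ_symm_eq (k : ℤ)
    {Γ Γ' : zmap (S.X (k + 1)) Y ⟶ zmap (S.X (k + 1)) Y} (t : A.D (S.X k) Y)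
    (h : (A.σ _).symm Γ' = (A.σ _).symm Γ + A.pre (S.d k) t) :
    GammaCohomologous S Y k Γ Γ' :=
  ⟨A.σ _ t, (A.σ _).symm.injective
    (by rw [GammaCob_σ, σ_symm_comp, Equiv.symm_apply_apply, h])⟩

variable (n : ℤ)

lemma Gamma_comp_σ (c : S.X n ⟶ Y) (γ : zmap (S.X (n + 1)) Y ⟶ S.d n ≫ c)
    (b : A.D (S.X (n + 1)) Y) :
    S.Gamma n c (γ ≫ A.σ _ b) = S.Gamma n c γ ≫ A.σ _ (A.pre (S.d (n + 1)) b) := by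
  unfold SecChainComplex.Gamma GammaGen
  simp only [Bicategory.whiskerLeft_comp, ← A.σ_pre, Category.assoc,
    reassoc_of% A.σ_natural, A.σ_natural]

lemma σ_symm_Gamma_comp {W : B} (u : S.X n ⟶ W) (γ : zmap (S.X (n + 1)) W ⟶ S.d n ≫ u)
    (v : W ⟶ Y) :
    (A.σ _).symm
        (S.Gamma n (u ≫ v)
          (eqToHom (zmap_comp (S.X (n + 1)) v).symm ≫ γ ▷ v ≫
            eqToHom (Bicategory.Strict.assoc (S.d n) u v))) =
      A.post v ((A.σ _).symm (S.Gamma n u γ)) := by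
  rw [S.Gamma_comp, ← (A.σ _).apply_symm_apply (S.Gamma n u γ), Equiv.symm_apply_apply,
    ← A.σ_post, A.σ_natural, ← Category.assoc, eqToHom_trans, eqToHom_refl,
    Category.id_comp, Equiv.symm_apply_apply]

include A hinv

lemma exists_σ_symm_Gamma_eq_add_pre (c : S.X n ⟶ Y)
    (γ γ' : zmap (S.X (n + 1)) Y ⟶ S.d n ≫ c) :
    ∃ b : A.D (S.X (n + 1)) Y,
      (A.σ _).symm (S.Gamma n c γ') = (A.σ _).symm (S.Gamma n c γ) + A.pre (S.d (n + 1)) b := by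
  have := hinv γ
  refine ⟨(A.σ _).symm (inv γ ≫ γ'), ?_⟩
  have hγ' : γ' = γ ≫ A.σ _ ((A.σ _).symm (inv γ ≫ γ')) := by simp
  conv_lhs => rw [hγ', A.Gamma_comp_σ]
  rw [σ_symm_comp, Equiv.symm_apply_apply]

lemma exists_σ_symm_Gamma_eq_post_add_pre {W : B} (u : S.X n ⟶ W)
    (γu : zmap (S.X (n + 1)) W ⟶ S.d n ≫ u) (v : W ⟶ Y) {c : S.X n ⟶ Y}
    (hc : hQm (u ≫ v) = hQm c) (γ : zmap (S.X (n + 1)) Y ⟶ S.d n ≫ c) :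
    ∃ t : A.D (S.X (n + 1)) Y,
      (A.σ _).symm (S.Gamma n c γ) =
        A.post v ((A.σ _).symm (S.Gamma n u γu)) + A.pre (S.d (n + 1)) t := by
  obtain ⟨τ⟩ := nonempty_track_of_hQm_eq hinv hc
  obtain ⟨t, ht⟩ := A.exists_σ_symm_Gamma_eq_add_pre hinv S n c
    ((eqToHom (zmap_comp (S.X (n + 1)) v).symm ≫ γu ▷ v ≫
      eqToHom (Bicategory.Strict.assoc (S.d n) u v)) ≫ S.d n ◁ τ) γ
  refine ⟨t, ?_⟩
  rw [ht, S.Gamma_comp_whiskerLeft, σ_symm_Gamma_comp]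

lemma exists_σ_symm_Gamma_eq_add [Limits.HasBinaryBiproducts (HoCat B)]
    (hzero : ∀ X Y : B, hQm (zmap X Y) = (0 : hQ X ⟶ hQ Y)) {a b s : S.X n ⟶ Y}
    (ha : hQm (S.d n ≫ a) = 0) (hb : hQm (S.d n ≫ b) = 0) (hs : hQm s = hQm a + hQm b)
    (γa : zmap (S.X (n + 1)) Y ⟶ S.d n ≫ a) (γb : zmap (S.X (n + 1)) Y ⟶ S.d n ≫ b)
    (γs : zmap (S.X (n + 1)) Y ⟶ S.d n ≫ s) :
    ∃ t : A.D (S.X (n + 1)) Y,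
      (A.σ _).symm (S.Gamma n s γs) =
        (A.σ _).symm (S.Gamma n a γa) + (A.σ _).symm (S.Gamma n b γb) +
          A.pre (S.d (n + 1)) t := by
  obtain ⟨W, u, v₁, v₂, hu₁, hu₂, hu⟩ := exists_hQm_comp_eq_biprod a b
  obtain ⟨v₃, hv₃⟩ := hQm_surjective (hQm v₁ + hQm v₂)
  have hu₃ : hQm (u ≫ v₃) = hQm s := by
    rw [hQm_comp, hv₃, Preadditive.comp_add, ← hQm_comp, ← hQm_comp, hu₁, hu₂, hs]
  obtain ⟨γu⟩ := nonempty_track_of_hQm_eq hinv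
    (show hQm (zmap (S.X (n + 1)) W) = hQm (S.d n ≫ u) by rw [hzero, hu _ ha hb])
  obtain ⟨t₁, ht₁⟩ := A.exists_σ_symm_Gamma_eq_post_add_pre hinv S n u γu v₁ hu₁ γa
  obtain ⟨t₂, ht₂⟩ := A.exists_σ_symm_Gamma_eq_post_add_pre hinv S n u γu v₂ hu₂ γb
  obtain ⟨t₃, ht₃⟩ := A.exists_σ_symm_Gamma_eq_post_add_pre hinv S n u γu v₃ hu₃ γs
  refine ⟨t₃ - t₁ - t₂, ?_⟩
  rw [ht₁, ht₂, ht₃, A.post_add hv₃, map_sub, map_sub]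
  abel

lemma gammaCohomologous_Gamma (c : S.X n ⟶ Y) (γ γ' : zmap (S.X (n + 1)) Y ⟶ S.d n ≫ c) :
    GammaCohomologous S Y (n + 1) (S.Gamma n c γ) (S.Gamma n c γ') :=
  have ⟨b, hb⟩ := A.exists_σ_symm_Gamma_eq_add_pre hinv S n c γ γ'
  A.gammaCohomologous_of_σ_symm_eq S (n + 1) b hb

lemma gammaCohomologous_Gamma_add [Limits.HasBinaryBiproducts (HoCat B)]
    (hzero : ∀ X Y : B, hQm (zmap X Y) = (0 : hQ X ⟶ hQ Y)) {c₁ c₂ c₁₂ : S.X n ⟶ Y}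
    (h₁ : hQm (S.d n ≫ c₁) = 0) (h₂ : hQm (S.d n ≫ c₂) = 0) (h₁₂ : hQm c₁₂ = hQm c₁ + hQm c₂)
    (γ₁ : zmap (S.X (n + 1)) Y ⟶ S.d n ≫ c₁) (γ₂ : zmap (S.X (n + 1)) Y ⟶ S.d n ≫ c₂)
    (γ₁₂ : zmap (S.X (n + 1)) Y ⟶ S.d n ≫ c₁₂) :
    GammaCohomologous S Y (n + 1) (S.Gamma n c₁₂ γ₁₂) (S.Gamma n c₁ γ₁ ≫ S.Gamma n c₂ γ₂) := by
  obtain ⟨t, ht⟩ := A.exists_σ_symm_Gamma_eq_add hinv S n hzero h₁ h₂ h₁₂ γ₁ γ₂ γ₁₂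
  refine A.gammaCohomologous_of_σ_symm_eq S (n + 1) (-t) ?_
  rw [σ_symm_comp, ht, map_neg]
  abel

lemma gammaCohomologous_Gamma_of_hQm_eq_add_d [Limits.HasBinaryBiproducts (HoCat B)]
    (hzero : ∀ X Y : B, hQm (zmap X Y) = (0 : hQ X ⟶ hQ Y)) {k : ℤ} (hk : n = k + 1)
    {c c' : S.X n ⟶ Y} (hc : hQm (S.d n ≫ c) = 0) (e : hQ (S.X k) ⟶ hQ Y)
    (he : hQm c' = hQm c + eqToHom (congrArg (fun m => hQ (S.X m)) hk) ≫ hQm (S.d k) ≫ e)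
    (γ : zmap (S.X (n + 1)) Y ⟶ S.d n ≫ c) (γ' : zmap (S.X (n + 1)) Y ⟶ S.d n ≫ c') :
    GammaCohomologous S Y (n + 1) (S.Gamma n c γ) (S.Gamma n c' γ') := by
  subst hk
  obtain ⟨h, rfl⟩ := hQm_surjective e
  have := hinv (S.δ k)
  have hdh : hQm (S.d (k + 1) ≫ S.d k ≫ h) = 0 := by
    rw [← Bicategory.Strict.assoc, hQm_eq_of_track (S.δ k ▷ h), zmap_comp, hzero]
  obtain ⟨t, ht⟩ := A.exists_σ_symm_Gamma_eq_add hinv S (k + 1) hzero hc hdh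
    (by simpa [hQm_comp] using he) γ
    (eqToHom (zmap_comp _ h).symm ≫ inv (S.δ k) ▷ h ≫ eqToHom (Bicategory.Strict.assoc _ _ _)) γ'
  refine A.gammaCohomologous_of_σ_symm_eq S (k + 1 + 1) t ?_
  rw [ht, S.Gamma_d_comp_eq_id k h, σ_symm_id, add_zero]

lemma gammaCohomologous_Gamma_of_isSecChainMap {S' : SecChainComplex B}
    {f : ∀ k : ℤ, S.X k ⟶ S'.X k} {φ : ∀ k : ℤ, (S.d k ≫ f k) ⟶ (f (k + 1) ≫ S'.d k)}
    (hfφ : IsSecChainMap S S' f φ) (c' : S'.X n ⟶ Y)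
    (γ' : zmap (S'.X (n + 1)) Y ⟶ S'.d n ≫ c') (γ : zmap (S.X (n + 1)) Y ⟶ S.d n ≫ (f n ≫ c')) :
    GammaCohomologous S Y (n + 1) (S.Gamma n (f n ≫ c') γ)
      (eqToHom (comp_zmap (f (n + 1 + 1)) Y).symm ≫ f (n + 1 + 1) ◁ S'.Gamma n c' γ' ≫
        eqToHom (comp_zmap (f (n + 1 + 1)) Y)) := by
  have := hinv (φ n)
  rw [hfφ.whiskerLeft_Gamma]
  exact A.gammaCohomologous_Gamma hinv S n _ γ _

end AdditiveTrackStr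

theorem statement16 {B : Type u} [Bicategory.{w, v} B] [Bicategory.Strict B]
    [StrictZero B]
    (hinv : ∀ {X' Y' : B} {f g : X' ⟶ Y'} (η : f ⟶ g), IsIso η)
    [Preadditive (HoCat B)] [CategoryTheory.Limits.HasFiniteBiproducts (HoCat B)]
    (hzero : ∀ X Y : B, hQm (zmap X Y) = (0 : hQ X ⟶ hQ Y))
    (Pb : B → Prop)
    -- (a) `𝕃`-additive with `𝐚` closed under `𝕃`, or (b) `ℝ`-additive with `ℝ`
    -- preserving `𝐚`-exactness and `𝐚` closed under `ℝ`:
    (hLR :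
      (∃ l : LAdditiveStr B, ∀ Z : HoCat B, Pb Z.as → Pb ((l.L.obj Z).as)) ∨
      (∃ r : RAdditiveStr B,
        (∀ A : ChainComplexZ (HoCat B),
           A.aExact (fun Z => Pb Z.as) →
           (A.mapComplex r.R r.Rzero).aExact (fun Z => Pb Z.as)) ∧
        (∀ Z : HoCat B, Pb Z.as → Pb ((r.R.obj Z).as))))
    (X₀ : B) (S : SecChainComplex B)
    (Y : B) (n : ℤ) :
    -- (1) independence of the choice of the track `γ`:
    (∀ (c : S.X n ⟶ Y), hQm (S.d n ≫ c) = 0 →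
      ∀ (γ γ' : zmap (S.X (n + 1)) Y ⟶ S.d n ≫ c),
        GammaCohomologous S Y (n + 1) (S.Gamma n c γ) (S.Gamma n c γ')) ∧
    -- (2) independence of the representing cocycle `c` of the class
    -- `[c] ∈ Ext^n_𝐚(X,Y)`:
    (∀ (c c' : S.X n ⟶ Y), hQm (S.d n ≫ c) = 0 → hQm (S.d n ≫ c') = 0 →
      ∀ (γ : zmap (S.X (n + 1)) Y ⟶ S.d n ≫ c)
        (γ' : zmap (S.X (n + 1)) Y ⟶ S.d n ≫ c')
        (e : hQ (S.X (n - 1)) ⟶ hQ Y),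
        hQm c' = hQm c +
          eqToHom (congrArg (fun m => hQ (S.X m)) (show n = n - 1 + 1 by ring)) ≫
            hQm (S.d (n - 1)) ≫ e →
        GammaCohomologous S Y (n + 1) (S.Gamma n c γ) (S.Gamma n c' γ')) ∧
    -- (3) additivity: `d₍₂₎` is a homomorphism of groups:
    (∀ (c₁ c₂ c₁₂ : S.X n ⟶ Y),
      hQm (S.d n ≫ c₁) = 0 → hQm (S.d n ≫ c₂) = 0 → hQm (S.d n ≫ c₁₂) = 0 →
      hQm c₁₂ = hQm c₁ + hQm c₂ →
      ∀ (γ₁ : zmap (S.X (n + 1)) Y ⟶ S.d n ≫ c₁)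
        (γ₂ : zmap (S.X (n + 1)) Y ⟶ S.d n ≫ c₂)
        (γ₁₂ : zmap (S.X (n + 1)) Y ⟶ S.d n ≫ c₁₂),
        GammaCohomologous S Y (n + 1) (S.Gamma n c₁₂ γ₁₂)
          (S.Gamma n c₁ γ₁ ≫ S.Gamma n c₂ γ₂)) ∧
    -- (4) independence of the `𝐛`-resolution: for any other `𝐛`-resolution `S'` of
    -- `X₀` and any comparison secondary chain map `(f,φ) : S → S'` over `X₀`, the
    -- differential commutes with the induced map `f^*`:
    (∀ (S' : SecChainComplex B), S'.IsSecResolution Pb X₀ →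
      ∀ (f : ∀ k : ℤ, S.X k ⟶ S'.X k)
        (φ : ∀ k : ℤ, (S.d k ≫ f k) ⟶ (f (k + 1) ≫ S'.d k)),
        IsSecChainMap S S' f φ →
        ∀ (c' : S'.X n ⟶ Y), hQm (S'.d n ≫ c') = 0 →
        ∀ (γ' : zmap (S'.X (n + 1)) Y ⟶ S'.d n ≫ c')
          (γ₁ : zmap (S.X (n + 1)) Y ⟶ S.d n ≫ (f n ≫ c')),
          GammaCohomologous S Y (n + 1)
            (S.Gamma n (f n ≫ c') γ₁)
            (eqToHom (comp_zmap (f (n + 1 + 1)) Y).symm ≫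
              (f (n + 1 + 1) ◁ S'.Gamma n c' γ') ≫
              eqToHom (comp_zmap (f (n + 1 + 1)) Y))) := by
  obtain ⟨A⟩ : Nonempty (AdditiveTrackStr B) := by
    rcases hLR with ⟨l, -⟩ | ⟨r, -, -⟩
    exacts [⟨l.toAdditiveTrackStr⟩, ⟨r.toAdditiveTrackStr⟩]
  have := Limits.hasBinaryBiproducts_of_finite_biproducts (HoCat B)
  refine ⟨fun c _ γ γ' => A.gammaCohomologous_Gamma hinv S n c γ γ', ?_, ?_, ?_⟩
  · intro c c' hc _ γ γ' e he
    exact A.gammaCohomologous_Gamma_of_hQm_eq_add_d hinv S n hzero (by ring) hc e he γ γ'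
  · intro c₁ c₂ c₁₂ h₁ h₂ _ h₁₂ γ₁ γ₂ γ₁₂
    exact A.gammaCohomologous_Gamma_add hinv S n hzero h₁ h₂ h₁₂ γ₁ γ₂ γ₁₂
  · intro S' _ f φ hfφ c' _ γ' γ
    exact A.gammaCohomologous_Gamma_of_isSecChainMap hinv S n hfφ c' γ' γ
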